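/- arXiv:1704.07215 — 4 statements merged into one kernel-verified Lean document; each statement's English description precedes it below -/
import Mathlib

section
/- For two adjacent ternary intervals I₁, I₂ of the same generation n, with base-3 digit sequences (x₁(I),…,xₙ(I)) of their left endpoints, the number of digits equal to 1 differs by at most 1: |1(I₁) − 1(I₂)| ≤ 1, where 1(I) = card{1 ≤ j ≤ n : x_j(I) = 1}. -/
/-- For a ternary interval of generation `n` contained in `[0,1)`, indexed by
`k ∈ {0, …, 3ⁿ − 1}`, the base-3 digits of its left endpoint `k·3⁻ⁿ` are
`x_j = (k / 3^(n-j)) % 3` for `1 ≤ j ≤ n`. `onesCount n k` is the number of digits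
equal to `1`. -/
def onesCount (n k : ℕ) : ℕ :=
  ((Finset.range n).filter fun j => k / 3 ^ (n - 1 - j) % 3 = 1).card

lemma onesCount_succ (n k : ℕ) :
    onesCount (n + 1) k = onesCount n (k / 3) + (if k % 3 = 1 then 1 else 0) := by
  unfold onesCount
  rw [Finset.range_add_one, Finset.filter_insert]
  have hdig : ∀ j ∈ Finset.range n,
      (k / 3 ^ (n + 1 - 1 - j) % 3 = 1) = ((k / 3) / 3 ^ (n - 1 - j) % 3 = 1) := by
    intro j hj
    have hj' : j < n := Finset.mem_range.mp hj
    have h1 : n + 1 - 1 - j = (n - 1 - j) + 1 := by omega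
    rw [h1, pow_succ', Nat.div_div_eq_div_mul]
  have hfc : (Finset.range n).filter (fun j => k / 3 ^ (n + 1 - 1 - j) % 3 = 1)
      = (Finset.range n).filter (fun j => (k / 3) / 3 ^ (n - 1 - j) % 3 = 1) := by
    apply Finset.filter_congr
    intro j hj
    simp only [hdig j hj]
  have hlast : k / 3 ^ (n + 1 - 1 - n) % 3 = k % 3 := by
    simp
  rw [hlast]
  by_cases h : k % 3 = 1
  · rw [if_pos h, if_pos h, Finset.card_insert_of_notMem (by simp), hfc]
  · rw [if_neg h, if_neg h, hfc, add_zero]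

lemma aux (n k : ℕ) :
    ((onesCount n k : ℤ) - (onesCount n (k + 1) : ℤ)).natAbs ≤ 1 := by
  induction n generalizing k with
  | zero => simp [onesCount]
  | succ n ih =>
    rw [onesCount_succ, onesCount_succ]
    have h3 : k % 3 < 3 := Nat.mod_lt k (by norm_num)
    interval_cases h : k % 3
    · have h1 : (k + 1) % 3 = 1 := by omega
      have h2 : (k + 1) / 3 = k / 3 := by omega
      rw [h1, h2]
      simp
    · have h1 : (k + 1) % 3 = 2 := by omega
      have h2 : (k + 1) / 3 = k / 3 := by omega
      rw [h1, h2]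
      simp
    · have h1 : (k + 1) % 3 = 0 := by omega
      have h2 : (k + 1) / 3 = k / 3 + 1 := by omega
      rw [h1, h2]
      simpa using ih (k / 3)

/-- For two adjacent ternary intervals of the same generation `n` inside `[0,1)`,
the numbers of base-3 digits equal to `1` differ by at most `1`. -/
theorem stmt2 (n k : ℕ) (hk : k + 1 < 3 ^ n) :
    ((onesCount n k : ℤ) - (onesCount n (k + 1) : ℤ)).natAbs ≤ 1 := by
  exact aux n k
end

section
/- Let μ be a doubling measure on ℝ with constant D, let 𝒮 = ⋃ₙ 𝒮ₙ be a levelled family of ternary intervals with 𝒮ₙ of generation gₙ, and suppose the coefficients a_I = (μ(I^r) − μ(I))/μ(I) (where I^r is the right neighbour of I at the same generation) satisfy: for each n ≥ 1, whenever J ∈ 𝒮ₙ and A ∈ ℕ is such that the Riesz density is constant on ternary intervals of length 3^A·|I| for I ∈ 𝒮ₙ₊₁ and 3^A|I| ≤ |J|, then Σ_{I ∈ 𝒮ₙ₊₁, I ⊂ J} |a_I|·μ(I) ≤ (2·3⁻ᴬ + (D+1)·τᴬ)·μ(J), where τ = τ(D) < 1 is the child-decay constant. -/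
/-!
Since `μ` is constant on each block of `3^A` consecutive intervals of generation `g (n+1)`, the
differences `μ(Iʳ) − μ(I)` vanish except at the last interval of a block, so the sum collapses to
`∑_K |c(Kʳ) − c(K)|` over the intervals `K ⊆ J` of generation `g (n+1) − A`, where `c(K) = μ(K)/3^A`
is the common mass of the children of `K`. Bounding each term by `c(Kʳ) + c(K)` gives
`2·3⁻ᴬ·μ(J)` plus one boundary term `c(Lʳ)`, `L` the last such `K`; doubling compares `c(Lʳ)` with
the last child of `L`, whose mass is at most `τᴬ·μ(L) ≤ τᴬ·μ(J)` by child decay.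
-/

open MeasureTheory Set
open scoped ENNReal

/-- A measure on `ℝ` is doubling with constant `D` (real form, on measures of adjacent
intervals of the same length). -/
def DoublingWithR (μ : Measure ℝ) (D : ℝ) : Prop :=
  ∀ a L : ℝ, 0 < L →
    (μ (Icc a (a + L))).toReal ≤ D * (μ (Icc (a + L) (a + 2 * L))).toReal ∧
    (μ (Icc (a + L) (a + 2 * L))).toReal ≤ D * (μ (Icc a (a + L))).toReal

/-- The ternary interval of generation `n` and index `k`: `[k·3⁻ⁿ, (k+1)·3⁻ⁿ)`. -/
noncomputable def ternary (n : ℕ) (k : ℤ) : Set ℝ :=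
  Ico ((k : ℝ) * (3 : ℝ) ^ (-(n : ℤ))) (((k : ℝ) + 1) * (3 : ℝ) ^ (-(n : ℤ)))

open Filter Topology

lemma sum_Ico_mul_eq_sum_sum {M : Type*} [AddCommMonoid M] (f : ℤ → M) {B : ℤ} (hB : 0 ≤ B)
    {p q : ℤ} (hpq : p ≤ q) :
    ∑ k ∈ Finset.Ico (B * p) (B * q), f k
      = ∑ m ∈ Finset.Ico p q, ∑ k ∈ Finset.Ico (B * m) (B * (m + 1)), f k := by
  induction q, hpq using Int.leInduction with
  | base => simp
  | succ q hpq ih =>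
    rw [← Finset.insert_Ico_right_eq_Ico_add_one hpq, Finset.sum_insert (by simp), ← ih,
      add_comm (Finset.sum _ _), ← Finset.sum_union (Finset.Ico_disjoint_Ico_consecutive _ _ _),
      Finset.Ico_union_Ico_eq_Ico (by gcongr) (by gcongr; linarith)]

lemma sum_Ico_abs_sub_eq_of_const_on_blocks (f : ℤ → ℝ) {B : ℤ} (hB : 0 < B)
    (hf : ∀ m i, 0 ≤ i → i < B → f (B * m + i) = f (B * m)) {p q : ℤ} (hpq : p ≤ q) :
    ∑ k ∈ Finset.Ico (B * p) (B * q), |f (k + 1) - f k|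
      = ∑ m ∈ Finset.Ico p q, |f (B * (m + 1)) - f (B * m)| := by
  rw [sum_Ico_mul_eq_sum_sum _ hB.le hpq]
  refine Finset.sum_congr rfl fun m _ => ?_
  have hconst : ∀ k, B * m ≤ k → k < B * (m + 1) → f k = f (B * m) := fun k hk₁ hk₂ => by
    simpa using hf m (k - B * m) (by linarith) (by linarith)
  have hlast : B * (m + 1) - 1 ∈ Finset.Ico (B * m) (B * (m + 1)) := by
    rw [Finset.mem_Ico]; constructor <;> linarith
  rw [Finset.sum_eq_single_of_mem _ hlast fun k hk hne => ?_]
  · rw [sub_add_cancel, hconst _ (Finset.mem_Ico.1 hlast).1 (Finset.mem_Ico.1 hlast).2]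
  · rw [Finset.mem_Ico] at hk
    rw [hconst k hk.1 hk.2, hconst (k + 1) (by linarith) (by omega), sub_self, abs_zero]

lemma sum_Ico_abs_sub_le {c : ℤ → ℝ} (hc : ∀ m, 0 ≤ c m) {p q : ℤ} (hpq : p ≤ q) :
    ∑ m ∈ Finset.Ico p q, |c (m + 1) - c m| ≤ 2 * (∑ m ∈ Finset.Ico p q, c m) + c q := by
  have hshift : ∑ m ∈ Finset.Ico p q, c (m + 1) ≤ (∑ m ∈ Finset.Ico p q, c m) + c q := by
    calc ∑ m ∈ Finset.Ico p q, c (m + 1) = ∑ m ∈ Finset.Ico (p + 1) (q + 1), c m :=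
          Finset.sum_Ico_add' c p q 1
      _ ≤ ∑ m ∈ Finset.Ico p (q + 1), c m :=
          Finset.sum_le_sum_of_subset_of_nonneg (Finset.Ico_subset_Ico (by linarith) le_rfl)
            fun m _ _ => hc m
      _ = (∑ m ∈ Finset.Ico p q, c m) + c q := by
          rw [← Finset.insert_Ico_right_eq_Ico_add_one hpq, Finset.sum_insert (by simp), add_comm]
  calc ∑ m ∈ Finset.Ico p q, |c (m + 1) - c m|
      ≤ ∑ m ∈ Finset.Ico p q, (c (m + 1) + c m) := Finset.sum_le_sum fun m _ => by
        simpa only [abs_of_nonneg (hc _)] using abs_sub (c (m + 1)) (c m)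
    _ ≤ 2 * (∑ m ∈ Finset.Ico p q, c m) + c q := by
        rw [Finset.sum_add_distrib]; linarith

lemma nullSingletonClass_of_doublingWithR {μ : Measure ℝ} [IsLocallyFiniteMeasure μ] {D : ℝ}
    (hD : 0 ≤ D) (hdbl : DoublingWithR μ D) : NullSingletonClass μ := by
  refine ⟨fun x => ?_⟩
  have hshrink : Tendsto (fun r => μ (Ioc x (x + r))) (𝓝[>] 0) (𝓝 0) := by
    have h := tendsto_measure_biInter_gt (μ := μ) (s := fun r => Ioc x (x + r)) (a := (0 : ℝ))
      (fun _ _ => nullMeasurableSet_Ioc) (fun _ _ _ hij => Ioc_subset_Ioc_right (by linarith))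
      ⟨1, one_pos, measure_Ioc_lt_top.ne⟩
    have hempty : ⋂ r > (0 : ℝ), Ioc x (x + r) = ∅ := by
      refine eq_empty_of_forall_notMem fun y hy => ?_
      simp only [mem_iInter, mem_Ioc] at hy
      have := (hy ((y - x) / 2) (by linarith [(hy 1 one_pos).1])).2
      linarith [(hy 1 one_pos).1]
    rwa [hempty, measure_empty] at h
  have hbound : ∀ r > 0, (μ {x}).toReal ≤ D * (μ (Ioc x (x + r))).toReal := by
    intro r hr
    calc (μ {x}).toReal ≤ (μ (Icc x (x + r / 2))).toReal :=
          ENNReal.toReal_mono measure_Icc_lt_top.ne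
            (measure_mono (singleton_subset_iff.2 ⟨le_rfl, by linarith⟩))
      _ ≤ D * (μ (Icc (x + r / 2) (x + 2 * (r / 2)))).toReal := (hdbl x (r / 2) (by linarith)).1
      _ ≤ D * (μ (Ioc x (x + r))).toReal := by
          gcongr
          · exact measure_Ioc_lt_top.ne
          · exact Icc_subset_Ioc_iff (by linarith) |>.2 ⟨by linarith, by linarith⟩
  have hlim : Tendsto (fun r => D * (μ (Ioc x (x + r))).toReal) (𝓝[>] 0) (𝓝 0) := by
    simpa using ((ENNReal.tendsto_toReal ENNReal.zero_ne_top).comp hshrink).const_mul D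
  have hx : (μ {x}).toReal ≤ 0 := ge_of_tendsto hlim (eventually_nhdsWithin_of_forall hbound)
  exact ((ENNReal.toReal_eq_zero_iff _).1 (le_antisymm hx ENNReal.toReal_nonneg)).resolve_right
    (measure_lt_top_of_subset (singleton_subset_iff.2 (left_mem_Icc.2 le_rfl))
      measure_Icc_lt_top.ne).ne

lemma measure_ternary_ne_top (μ : Measure ℝ) [IsLocallyFiniteMeasure μ] (n : ℕ) (k : ℤ) :
    μ (ternary n k) ≠ ∞ :=
  measure_Ico_lt_top.ne

lemma measure_ternary_add_one_le {μ : Measure ℝ} [NullSingletonClass μ] {D : ℝ}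
    (hdbl : DoublingWithR μ D) (n : ℕ) (k : ℤ) :
    (μ (ternary n (k + 1))).toReal ≤ D * (μ (ternary n k)).toReal := by
  set δ : ℝ := 3 ^ (-(n : ℤ))
  have hIcc : ∀ j : ℤ, μ (ternary n j) = μ (Icc (j * δ) (j * δ + δ)) := fun j => by
    rw [ternary, measure_congr Ico_ae_eq_Icc, add_one_mul]
  rw [hIcc, hIcc, Int.cast_add, Int.cast_one, add_one_mul, add_assoc, ← two_mul]
  exact (hdbl (k * δ) δ (by positivity)).2

lemma measure_Ico_mul_eq_sum (μ : Measure ℝ) {δ : ℝ} (hδ : 0 ≤ δ) {p q : ℤ} (hpq : p ≤ q) :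
    μ (Ico (p * δ) (q * δ)) = ∑ j ∈ Finset.Ico p q, μ (Ico (j * δ) (((j : ℝ) + 1) * δ)) := by
  induction q, hpq using Int.leInduction with
  | base => simp
  | succ q hpq ih =>
    have hle : (p : ℝ) * δ ≤ q * δ := mul_le_mul_of_nonneg_right (Int.cast_le.2 hpq) hδ
    rw [← Finset.insert_Ico_right_eq_Ico_add_one hpq, Finset.sum_insert (by simp), ← ih,
      add_comm (μ _), ← measure_union Ico_disjoint_Ico_same measurableSet_Ico,
      Ico_union_Ico_eq_Ico hle (by linarith), Int.cast_add, Int.cast_one]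

lemma measure_ternary_eq_sum (μ : Measure ℝ) (n d : ℕ) (m : ℤ) :
    μ (ternary n m) = ∑ k ∈ Finset.Ico (3 ^ d * m) (3 ^ d * (m + 1)), μ (ternary (n + d) k) := by
  have hscale : ∀ j : ℤ,
      ((3 ^ d * j : ℤ) : ℝ) * 3 ^ (-((n + d : ℕ) : ℤ)) = j * 3 ^ (-(n : ℤ)) := by
    intro j
    simp only [zpow_neg, zpow_natCast, pow_add]
    push_cast
    field_simp
  have h := measure_Ico_mul_eq_sum μ (δ := 3 ^ (-((n + d : ℕ) : ℤ))) (by positivity)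
    (p := 3 ^ d * m) (q := 3 ^ d * (m + 1)) (by gcongr; linarith)
  rw [hscale, hscale] at h
  simpa only [ternary, Int.cast_add, Int.cast_one] using h

lemma measure_ternary_le_pow_mul {μ : Measure ℝ} {τ : ℝ} (hτ : 0 ≤ τ)
    (hchild : ∀ n : ℕ, ∀ k i : ℤ, 0 ≤ i → i < 3 →
      (μ (ternary (n + 1) (3 * k + i))).toReal ≤ τ * (μ (ternary n k)).toReal)
    (n d : ℕ) {m k : ℤ} (hk₁ : 3 ^ d * m ≤ k) (hk₂ : k < 3 ^ d * (m + 1)) :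
    (μ (ternary (n + d) k)).toReal ≤ τ ^ d * (μ (ternary n m)).toReal := by
  induction d generalizing k with
  | zero =>
    obtain rfl : k = m := by simp only [pow_zero, one_mul] at hk₁ hk₂; omega
    simp
  | succ d ih =>
    have hparent :
        (μ (ternary (n + d + 1) k)).toReal ≤ τ * (μ (ternary (n + d) (k / 3))).toReal := by
      simpa only [Int.mul_ediv_add_emod] using hchild (n + d) (k / 3) (k % 3) (by omega) (by omega)
    have hm : (μ (ternary (n + d) (k / 3))).toReal ≤ τ ^ d * (μ (ternary n m)).toReal :=
      ih ((Int.le_ediv_iff_mul_le (by norm_num)).2 (by rw [pow_succ] at hk₁; linarith))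
        ((Int.ediv_lt_iff_lt_mul (by norm_num)).2 (by rw [pow_succ] at hk₂; linarith))
    calc (μ (ternary (n + (d + 1)) k)).toReal
        ≤ τ * (μ (ternary (n + d) (k / 3))).toReal := hparent
      _ ≤ τ * (τ ^ d * (μ (ternary n m)).toReal) := by gcongr
      _ = τ ^ (d + 1) * (μ (ternary n m)).toReal := by ring

lemma measure_ternary_toReal_eq_sum (μ : Measure ℝ) [IsLocallyFiniteMeasure μ] (n d : ℕ)
    (m : ℤ) :
    (μ (ternary n m)).toReal
      = ∑ k ∈ Finset.Ico (3 ^ d * m) (3 ^ d * (m + 1)), (μ (ternary (n + d) k)).toReal := by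
  rw [measure_ternary_eq_sum μ n d m,
    ENNReal.toReal_sum fun k _ => measure_ternary_ne_top μ (n + d) k]

lemma measure_ternary_toReal_eq_pow_mul (μ : Measure ℝ) [IsLocallyFiniteMeasure μ] (n A : ℕ)
    (m : ℤ) (hconst : ∀ i : ℤ, 0 ≤ i → i < 3 ^ A →
      μ (ternary (n + A) (3 ^ A * m + i)) = μ (ternary (n + A) (3 ^ A * m))) :
    (μ (ternary n m)).toReal = 3 ^ A * (μ (ternary (n + A) (3 ^ A * m))).toReal := by
  have hcard : (Finset.Ico (3 ^ A * m) (3 ^ A * (m + 1))).card = 3 ^ A := by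
    rw [Int.card_Ico,
      show (3 : ℤ) ^ A * (m + 1) - 3 ^ A * m = ((3 ^ A : ℕ) : ℤ) by push_cast; ring,
      Int.toNat_natCast]
  rw [measure_ternary_toReal_eq_sum μ n A m, Finset.sum_congr rfl fun k hk => ?_,
    Finset.sum_const, hcard, nsmul_eq_mul, Nat.cast_pow, Nat.cast_ofNat]
  rw [Finset.mem_Ico] at hk
  simpa using congrArg ENNReal.toReal (hconst (k - 3 ^ A * m) (by linarith) (by linarith))

lemma measure_ternary_toReal_le (μ : Measure ℝ) [IsLocallyFiniteMeasure μ] (n d : ℕ) {m k : ℤ}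
    (hk₁ : 3 ^ d * m ≤ k) (hk₂ : k < 3 ^ d * (m + 1)) :
    (μ (ternary (n + d) k)).toReal ≤ (μ (ternary n m)).toReal := by
  rw [measure_ternary_toReal_eq_sum μ n d m]
  exact Finset.single_le_sum (f := fun k => (μ (ternary (n + d) k)).toReal)
    (fun _ _ => ENNReal.toReal_nonneg) (Finset.mem_Ico.2 ⟨hk₁, hk₂⟩)

lemma sum_measure_ternary_pow_mul_eq (μ : Measure ℝ) [IsLocallyFiniteMeasure μ] (n B A : ℕ)
    (m : ℤ) (hconst : ∀ k i : ℤ, 0 ≤ i → i < 3 ^ A →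
      μ (ternary (n + B + A) (3 ^ A * k + i)) = μ (ternary (n + B + A) (3 ^ A * k))) :
    ∑ k ∈ Finset.Ico (3 ^ B * m) (3 ^ B * (m + 1)), (μ (ternary (n + B + A) (3 ^ A * k))).toReal
      = (3 : ℝ) ^ (-(A : ℤ)) * (μ (ternary n m)).toReal := by
  rw [measure_ternary_toReal_eq_sum μ n B m, Finset.mul_sum]
  refine Finset.sum_congr rfl fun k _ => ?_
  rw [measure_ternary_toReal_eq_pow_mul μ _ A k (hconst k), zpow_neg, zpow_natCast,
    inv_mul_cancel_left₀ (by positivity)]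

lemma measure_ternary_pow_mul_succ_le {μ : Measure ℝ} [NullSingletonClass μ] {D τ : ℝ} (hD : 0 ≤ D)
    (hτ : 0 ≤ τ) (hdbl : DoublingWithR μ D)
    (hchild : ∀ n : ℕ, ∀ k i : ℤ, 0 ≤ i → i < 3 →
      (μ (ternary (n + 1) (3 * k + i))).toReal ≤ τ * (μ (ternary n k)).toReal)
    (n A : ℕ) (m : ℤ)
    (hconst : μ (ternary (n + A) (3 ^ A * m + (3 ^ A - 1))) = μ (ternary (n + A) (3 ^ A * m))) :
    (μ (ternary (n + A) (3 ^ A * (m + 1)))).toReal ≤ D * τ ^ A * (μ (ternary n m)).toReal := by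
  calc (μ (ternary (n + A) (3 ^ A * (m + 1)))).toReal
      = (μ (ternary (n + A) (3 ^ A * m + (3 ^ A - 1) + 1))).toReal := by ring_nf
    _ ≤ D * (μ (ternary (n + A) (3 ^ A * m + (3 ^ A - 1)))).toReal :=
        measure_ternary_add_one_le hdbl _ _
    _ ≤ D * (τ ^ A * (μ (ternary n m)).toReal) := by
        rw [hconst]
        gcongr
        exact measure_ternary_le_pow_mul hτ hchild n A le_rfl
          (by linarith [pow_pos (three_pos : (0 : ℤ) < 3) A])
    _ = D * τ ^ A * (μ (ternary n m)).toReal := by ring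

theorem stmt5_general (μ : Measure ℝ) [IsLocallyFiniteMeasure μ] (D τ : ℝ)
    (hD : 1 ≤ D) (hτ0 : 0 ≤ τ)
    (hdbl : DoublingWithR μ D)
    (hchild : ∀ n : ℕ, ∀ k i : ℤ, 0 ≤ i → i < 3 →
      (μ (ternary (n + 1) (3 * k + i))).toReal ≤ τ * (μ (ternary n k)).toReal)
    (g : ℕ → ℕ) (n A : ℕ) (hA : g n + A ≤ g (n + 1))
    (hconst : ∀ k i : ℤ, 0 ≤ i → i < 3 ^ A →
      μ (ternary (g (n + 1)) (3 ^ A * k + i)) = μ (ternary (g (n + 1)) (3 ^ A * k)))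
    (kJ : ℤ) :
    ∑ k ∈ Finset.Ico (kJ * 3 ^ (g (n + 1) - g n)) ((kJ + 1) * 3 ^ (g (n + 1) - g n)),
        |(μ (ternary (g (n + 1)) (k + 1))).toReal - (μ (ternary (g (n + 1)) k)).toReal|
      ≤ (2 * (3 : ℝ) ^ (-(A : ℤ)) + (D + 1) * τ ^ A) * (μ (ternary (g n) kJ)).toReal := by
  have := nullSingletonClass_of_doublingWithR (by linarith) hdbl
  obtain ⟨B, hB⟩ : ∃ B, g (n + 1) = g n + B + A := ⟨g (n + 1) - g n - A, by omega⟩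
  rw [show g (n + 1) - g n = B + A by omega]
  rw [hB] at hconst ⊢
  set f : ℤ → ℝ := fun k => (μ (ternary (g n + B + A) k)).toReal
  have hpq : 3 ^ B * kJ < 3 ^ B * (kJ + 1) := by gcongr; linarith
  have hright : f (3 ^ A * (3 ^ B * (kJ + 1))) ≤ D * τ ^ A * (μ (ternary (g n) kJ)).toReal := by
    have hlast := measure_ternary_pow_mul_succ_le (by linarith) hτ0 hdbl hchild (g n + B) A
      (3 ^ B * (kJ + 1) - 1)
      (hconst _ _ (by linarith [pow_pos (three_pos : (0 : ℤ) < 3) A]) (by linarith))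
    rw [sub_add_cancel] at hlast
    have hsub := measure_ternary_toReal_le μ (g n) B (m := kJ) (k := 3 ^ B * (kJ + 1) - 1)
      (by linarith) (by linarith)
    exact hlast.trans (by gcongr)
  have hrange : ∀ j : ℤ, j * 3 ^ (B + A) = 3 ^ A * (3 ^ B * j) := fun j => by ring
  rw [hrange, hrange, sum_Ico_abs_sub_eq_of_const_on_blocks f (by positivity)
    (fun m i h0 h1 => congrArg ENNReal.toReal (hconst m i h0 h1)) hpq.le]
  calc _ ≤ 2 * (∑ m ∈ Finset.Ico (3 ^ B * kJ) (3 ^ B * (kJ + 1)), f (3 ^ A * m))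
        + f (3 ^ A * (3 ^ B * (kJ + 1))) :=
        sum_Ico_abs_sub_le (c := fun m => f (3 ^ A * m)) (fun _ => ENNReal.toReal_nonneg) hpq.le
    _ ≤ _ := by
        have : 0 ≤ τ ^ A * (μ (ternary (g n) kJ)).toReal := by positivity
        rw [sum_measure_ternary_pow_mul_eq μ (g n) B A kJ hconst]
        linarith

/-- One-level Carleson estimate: let `μ` be `D`-doubling with ternary child-decay
constant `τ < 1`, let `𝒮ₙ` consist of the ternary intervals of generation `g n`, and
suppose the density of `μ` is constant on ternary intervals of generation `g (n+1) - A`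
(i.e. all `3^A` ternary descendants of generation `g (n+1)` of such an interval have equal
measure), with `g n + A ≤ g (n+1)`.  Then for every `J ∈ 𝒮ₙ`,
`Σ_{I ∈ 𝒮ₙ₊₁, I ⊆ J} |μ(Iʳ) − μ(I)| ≤ (2·3⁻ᴬ + (D+1)·τᴬ)·μ(J)`. -/
theorem stmt5 (μ : Measure ℝ) [IsLocallyFiniteMeasure μ] (D τ : ℝ)
    (hD : 1 ≤ D) (hτ0 : 0 ≤ τ) (hτ1 : τ < 1)
    (hdbl : DoublingWithR μ D)
    (hchild : ∀ n : ℕ, ∀ k i : ℤ, 0 ≤ i → i < 3 →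
      (μ (ternary (n + 1) (3 * k + i))).toReal ≤ τ * (μ (ternary n k)).toReal)
    (g : ℕ → ℕ) (hg : StrictMono g) (n A : ℕ) (hA : g n + A ≤ g (n + 1))
    (hconst : ∀ k i : ℤ, 0 ≤ i → i < 3 ^ A →
      μ (ternary (g (n + 1)) (3 ^ A * k + i)) = μ (ternary (g (n + 1)) (3 ^ A * k)))
    (kJ : ℤ) :
    ∑ k ∈ Finset.Ico (kJ * 3 ^ (g (n + 1) - g n)) ((kJ + 1) * 3 ^ (g (n + 1) - g n)),
        |(μ (ternary (g (n + 1)) (k + 1))).toReal - (μ (ternary (g (n + 1)) k)).toReal|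
      ≤ (2 * (3 : ℝ) ^ (-(A : ℤ)) + (D + 1) * τ ^ A) * (μ (ternary (g n) kJ)).toReal :=
  stmt5_general μ D τ hD hτ0 hdbl hchild g n A hA hconst kJ
end

section
/- Under the assumptions of the telescoping identity (∫_I Δₖ dμ = μ(I^r) − μ(I) for all I ∈ 𝒮ₖ, and Δₖ having the same sign as a_I on each I), for any point x₁ ∈ [0,1) contained in an interval Iₖ = [dₖ, dₖ + rₖ) ∈ 𝒮ₖ, one has the lower bound |μ([0,rₖ)) + ∫_0^{x₁} Δₖ(t) dμ(t)| ≥ min{μ(Iₖ), μ(Iₖ^r)}. -/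
open MeasureTheory Set
open scoped ENNReal

theorem ternary_subset (n : ℕ) (k : ℤ) (hk : 0 ≤ k) (hk' : k + 1 ≤ 3 ^ n) :
    ternary n k ⊆ Ico (0 : ℝ) 1 := by
  intro x hx
  obtain ⟨h1, h2⟩ := hx
  have hr : (0:ℝ) < (3 : ℝ) ^ (-(n : ℤ)) := by positivity
  constructor
  · have : (0:ℝ) ≤ (k:ℝ) * (3 : ℝ) ^ (-(n : ℤ)) := by
      have : (0:ℝ) ≤ (k:ℝ) := by exact_mod_cast hk
      positivity
    linarith
  · have hcast : ((k:ℝ) + 1) ≤ (3:ℝ) ^ n := by exact_mod_cast hk'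
    have hone : (3:ℝ) ^ n * (3 : ℝ) ^ (-(n : ℤ)) = 1 := by
      rw [← zpow_natCast (3:ℝ) n, ← zpow_add₀ (by norm_num : (3:ℝ) ≠ 0)]
      simp
    calc x < ((k:ℝ) + 1) * (3 : ℝ) ^ (-(n : ℤ)) := h2
      _ ≤ (3:ℝ) ^ n * (3 : ℝ) ^ (-(n : ℤ)) := by
          apply mul_le_mul_of_nonneg_right hcast hr.le
      _ = 1 := hone

/-- Lower bound: under the telescoping identity `∫_I Δₖ dμ = μ(Iʳ) − μ(I)` for ternary
intervals `I` of generation `gk` in `[0,1)`, together with the sign condition (`Δₖ` has the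
same sign as `a_I = (μ(Iʳ)−μ(I))/μ(I)` on `I`), for any `x₁` in `Iₖ = [dₖ, dₖ + rₖ)` one has
`|μ([0,rₖ)) + ∫_0^{x₁} Δₖ dμ| ≥ min{μ(Iₖ), μ(Iₖʳ)}`. -/
theorem stmt12 (μ : Measure ℝ) [IsLocallyFiniteMeasure μ] (gk : ℕ)
    (Δ : ℝ → ℝ) (hΔmeas : Measurable Δ)
    (hΔint : IntegrableOn Δ (Ico (0 : ℝ) 1) μ)
    (hI : ∀ k : ℤ, 0 ≤ k → k + 1 ≤ 3 ^ gk →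
      ∫ t in ternary gk k, Δ t ∂μ
        = (μ (ternary gk (k + 1))).toReal - (μ (ternary gk k)).toReal)
    (hsign : ∀ k : ℤ, 0 ≤ k → k + 1 ≤ 3 ^ gk →
      ((μ (ternary gk k)).toReal ≤ (μ (ternary gk (k + 1))).toReal →
        ∀ᵐ t ∂μ, t ∈ ternary gk k → 0 ≤ Δ t) ∧
      ((μ (ternary gk (k + 1))).toReal < (μ (ternary gk k)).toReal →
        ∀ᵐ t ∂μ, t ∈ ternary gk k → Δ t ≤ 0)) :
    ∀ x₁ : ℝ, ∀ k : ℤ, 0 ≤ k → k + 1 ≤ 3 ^ gk → x₁ ∈ ternary gk k →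
      min (μ (ternary gk k)).toReal (μ (ternary gk (k + 1))).toReal
        ≤ |(μ (Ico (0 : ℝ) ((3 : ℝ) ^ (-(gk : ℤ))))).toReal
            + ∫ t in Ico (0 : ℝ) x₁, Δ t ∂μ| := by
  intro x₁ k hk0 hk1 hx₁
  set r : ℝ := (3 : ℝ) ^ (-(gk : ℤ)) with hr
  have hrpos : (0:ℝ) < r := by positivity
  have hIco0 : Ico (0:ℝ) r = ternary gk 0 := by
    simp [ternary, hr]
  -- f j = toReal of measure of ternary interval j
  set f : ℤ → ℝ := fun j => (μ (ternary gk j)).toReal with hf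
  -- integrability on subsets
  have hint : ∀ s : Set ℝ, s ⊆ Ico (0:ℝ) 1 → IntegrableOn Δ s μ :=
    fun s hs => hΔint.mono_set hs
  -- telescoping: ∫ over Ico 0 (n*r) = f n - f 0
  have htel : ∀ n : ℕ, (n : ℤ) ≤ 3 ^ gk →
      ∫ t in Ico (0:ℝ) ((n:ℝ) * r), Δ t ∂μ = f n - f 0 := by
    intro n
    induction n with
    | zero => intro _; simp
    | succ m ih =>
      intro hm
      have hm1 : (m : ℤ) + 1 ≤ 3 ^ gk := by exact_mod_cast hm
      have hm' : (m : ℤ) ≤ 3 ^ gk := by linarith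
      have hsplit : Ico (0:ℝ) (((m:ℝ)+1) * r)
          = Ico (0:ℝ) ((m:ℝ) * r) ∪ Ico ((m:ℝ) * r) (((m:ℝ)+1) * r) := by
        rw [Ico_union_Ico_eq_Ico]
        · positivity
        · nlinarith
      have hdisj : Disjoint (Ico (0:ℝ) ((m:ℝ) * r)) (Ico ((m:ℝ) * r) (((m:ℝ)+1) * r)) :=
        Set.disjoint_left.mpr fun x hx hx' => absurd hx.2 (not_lt.mpr hx'.1)
      have hsub1 : Ico (0:ℝ) ((m:ℝ) * r) ⊆ Ico (0:ℝ) 1 := by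
        intro x hx
        have := ternary_subset gk m (by positivity) hm1
        rcases lt_or_ge x r with h | h
        · exact ⟨hx.1, lt_of_lt_of_le h (by
            have hone : (3:ℝ) ^ gk * r = 1 := by
              rw [hr, ← zpow_natCast (3:ℝ) gk, ← zpow_add₀ (by norm_num : (3:ℝ) ≠ 0)]
              simp
            have : (1:ℝ) ≤ (3:ℝ)^gk := one_le_pow₀ (by norm_num)
            nlinarith)⟩
        · refine ⟨hx.1, ?_⟩
          have hxm : x < (m:ℝ) * r := hx.2
          have hcast : ((m:ℝ)) ≤ (3:ℝ) ^ gk := by exact_mod_cast hm' 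
          have hone : (3:ℝ) ^ gk * r = 1 := by
            rw [hr, ← zpow_natCast (3:ℝ) gk, ← zpow_add₀ (by norm_num : (3:ℝ) ≠ 0)]
            simp
          nlinarith
      have hsub2 : Ico ((m:ℝ) * r) (((m:ℝ)+1) * r) ⊆ Ico (0:ℝ) 1 := by
        have := ternary_subset gk m (by positivity) hm1
        simpa [ternary, hr] using this
      push_cast
      rw [hsplit, setIntegral_union hdisj measurableSet_Ico (hint _ hsub1) (hint _ hsub2),
        ih hm']
      have : Ico ((m:ℝ) * r) (((m:ℝ)+1) * r) = ternary gk m := by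
        simp [ternary, hr]
      rw [this, hI m (by positivity) hm1]
      simp only [hf]
      ring
  -- split point
  have hk0' : (0:ℝ) ≤ (k:ℝ) := by exact_mod_cast hk0
  have hdk : (0:ℝ) ≤ (k:ℝ) * r := by positivity
  have hdkx : (k:ℝ) * r ≤ x₁ := hx₁.1
  have hsubk : ternary gk k ⊆ Ico (0:ℝ) 1 := ternary_subset gk k hk0 hk1
  have hS : Ico ((k:ℝ)*r) x₁ ⊆ ternary gk k := fun x hx => ⟨hx.1, lt_of_lt_of_le hx.2 hx₁.2.le⟩
  have hsplit : Ico (0:ℝ) x₁ = Ico (0:ℝ) ((k:ℝ)*r) ∪ Ico ((k:ℝ)*r) x₁ :=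
    (Ico_union_Ico_eq_Ico hdk hdkx).symm
  have hx₁1 : x₁ < 1 := (ternary_subset gk k hk0 hk1 hx₁).2
  have hsub1 : Ico (0:ℝ) ((k:ℝ)*r) ⊆ Ico (0:ℝ) 1 := fun x hx =>
    ⟨hx.1, lt_of_lt_of_le hx.2 (le_trans hdkx hx₁1.le)⟩
  have hsubS : Ico ((k:ℝ)*r) x₁ ⊆ Ico (0:ℝ) 1 := fun x hx =>
    ⟨le_trans hdk hx.1, lt_trans hx.2 hx₁1⟩
  have hdisj : Disjoint (Ico (0:ℝ) ((k:ℝ)*r)) (Ico ((k:ℝ)*r) x₁) :=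
    Set.disjoint_left.mpr fun x hx hx' => absurd hx.2 (not_lt.mpr hx'.1)
  have hsplitint : ∫ t in Ico (0:ℝ) x₁, Δ t ∂μ
      = (∫ t in Ico (0:ℝ) ((k:ℝ)*r), Δ t ∂μ) + ∫ t in Ico ((k:ℝ)*r) x₁, Δ t ∂μ := by
    rw [hsplit, setIntegral_union hdisj measurableSet_Ico (hint _ hsub1) (hint _ hsubS)]
  have hkn : ((k.toNat : ℤ)) = k := Int.toNat_of_nonneg hk0
  have htelk : ∫ t in Ico (0:ℝ) ((k:ℝ)*r), Δ t ∂μ = f k - f 0 := by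
    have := htel k.toNat (by omega)
    rw [show ((k.toNat : ℝ)) = (k:ℝ) by exact_mod_cast congrArg Int.cast hkn,
      show ((k.toNat : ℤ)) = k from hkn] at this
    exact this
  set P : ℝ := ∫ t in Ico ((k:ℝ)*r) x₁, Δ t ∂μ with hP
  have hval : (μ (Ico (0 : ℝ) r)).toReal + ∫ t in Ico (0 : ℝ) x₁, Δ t ∂μ = f k + P := by
    rw [hsplitint, htelk, hIco0]
    show f 0 + (f k - f 0 + P) = f k + P
    ring
  rw [hval]
  have hminnonneg : 0 ≤ min (f k) (f (k+1)) := le_min ENNReal.toReal_nonneg ENNReal.toReal_nonneg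
  have key : min (f k) (f (k+1)) ≤ f k + P := by
    rcases le_or_gt (f k) (f (k+1)) with hle | hlt
    · -- Δ ≥ 0 a.e. on ternary gk k, so 0 ≤ P
      have hae := (hsign k hk0 hk1).1 hle
      have hPnn : 0 ≤ P := setIntegral_nonneg_ae measurableSet_Ico
        (by filter_upwards [hae] with t ht hts; exact ht (hS hts))
      calc min (f k) (f (k+1)) ≤ f k := min_le_left _ _
        _ ≤ f k + P := by linarith
    · -- Δ ≤ 0 a.e., so P ≥ f (k+1) - f k
      have hae := (hsign k hk0 hk1).2 hlt
      have haeT : 0 ≤ᵐ[μ.restrict (ternary gk k)] (fun t => -Δ t) :=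
        (ae_restrict_iff' (measurableSet_Ico : MeasurableSet (ternary gk k))).2
          (by filter_upwards [hae] with t ht hts; simpa using ht hts)
      have hmono : ∫ t in Ico ((k:ℝ)*r) x₁, (fun t => -Δ t) t ∂μ
          ≤ ∫ t in ternary gk k, (fun t => -Δ t) t ∂μ :=
        setIntegral_mono_set ((hint _ hsubk).neg) haeT (HasSubset.Subset.eventuallyLE hS)
      have h1 : ∫ t in Ico ((k:ℝ)*r) x₁, (fun t => -Δ t) t ∂μ = -P := by
        simp [hP, integral_neg]
      have h2 : ∫ t in ternary gk k, (fun t => -Δ t) t ∂μ = -(f (k+1) - f k) := by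
        have := hI k hk0 hk1
        simp only [integral_neg]
        rw [this]
      rw [h1, h2] at hmono
      calc min (f k) (f (k+1)) ≤ f (k+1) := min_le_right _ _
        _ ≤ f k + P := by linarith
  exact le_trans key (le_abs_self _)
end

section
/- Let F: X → ℝᵈ be an injective map on a metric space X such that F is weakly H-quasisymmetric (|a−x| ≤ |b−x| implies |F(a)−F(x)| ≤ H|F(b)−F(x)|), and suppose X contains, through each point x, a connected subset L_x on which F restricted is η-quasisymmetric with η independent of x, and such that every pair of distances |a−x|, |b−x| (a,b ∈ X) can be realized up to a factor √d by points a′, b′ ∈ L_x with |F(a)−F(x)| ≍ |F(a′)−F(x)| and |F(b)−F(x)| ≍ |F(b′)−F(x)| with uniform constants. Then F is quasisymmetric on X: there is a homeomorphism η′: [0,∞) → [0,∞) with |F(a)−F(x)|/|F(b)−F(x)| ≤ η′(|a−x|/|b−x|) for all x ≠ b. -/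
open Set Filter

/-- A quasisymmetry gauge: a homeomorphism of `[0,∞)` onto itself. -/
def IsQSGauge (η : ℝ → ℝ) : Prop :=
  ContinuousOn η (Ici 0) ∧ StrictMonoOn η (Ici 0) ∧ η 0 = 0 ∧
    Tendsto η atTop atTop

/-- Upgrade from weak quasisymmetry to quasisymmetry: if `F : X → ℝᵈ` is injective and
weakly `H`-quasisymmetric, and through each point `x` there is a connected set `L x ∋ x` on
which `F` is `η`-quasisymmetric (with `η` independent of `x`) and on which all distances to
`x` can be realized up to a factor `√d`, with the corresponding image distances comparable
with uniform constant `c`, then `F` is (globally) quasisymmetric on `X`. -/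
theorem stmt19 {X : Type*} [MetricSpace X] (d : ℕ)
    (F : X → EuclideanSpace ℝ (Fin d)) (hinj : Function.Injective F)
    (H : ℝ) (hH : 1 ≤ H)
    (hweak : ∀ a b x : X, dist a x ≤ dist b x →
      dist (F a) (F x) ≤ H * dist (F b) (F x))
    (L : X → Set X) (hLmem : ∀ x, x ∈ L x) (hLconn : ∀ x, IsConnected (L x))
    (η : ℝ → ℝ) (hη : IsQSGauge η)
    (hQSline : ∀ x p a b : X, p ∈ L x → a ∈ L x → b ∈ L x → b ≠ p →
      dist (F a) (F p) ≤ η (dist a p / dist b p) * dist (F b) (F p))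
    (c : ℝ) (hc : 1 ≤ c)
    (hreal : ∀ x a : X, ∃ a' ∈ L x,
      dist a' x ≤ dist a x ∧ dist a x ≤ Real.sqrt d * dist a' x ∧
      dist (F a') (F x) ≤ c * dist (F a) (F x) ∧
      dist (F a) (F x) ≤ c * dist (F a') (F x)) :
    ∃ η' : ℝ → ℝ, IsQSGauge η' ∧ ∀ x a b : X, b ≠ x →
      dist (F a) (F x) ≤ η' (dist a x / dist b x) * dist (F b) (F x) := by
  set s : ℝ := max (Real.sqrt d) 1 with hs
  have hs1 : (1 : ℝ) ≤ s := le_max_right _ _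
  have hs0 : (0 : ℝ) < s := lt_of_lt_of_le one_pos hs1
  have hc0 : (0 : ℝ) < c := lt_of_lt_of_le one_pos hc
  obtain ⟨hcont, hmono, h0, htop⟩ := hη
  have hmaps : ∀ t : ℝ, t ∈ Ici (0:ℝ) → s * t ∈ Ici (0:ℝ) := fun t ht =>
    mul_nonneg hs0.le ht
  have hηnonneg : ∀ r : ℝ, 0 ≤ r → 0 ≤ η r := by
    intro r hr
    have := hmono.monotoneOn (self_mem_Ici) hr hr
    rwa [h0] at this
  refine ⟨fun t => c ^ 2 * η (s * t), ⟨?_, ?_, ?_, ?_⟩, ?_⟩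
  · exact continuousOn_const.mul
      (hcont.comp (continuous_const.mul continuous_id).continuousOn hmaps)
  · intro u hu v hv huv
    have h : η (s * u) < η (s * v) :=
      hmono (hmaps u hu) (hmaps v hv) (by nlinarith)
    exact mul_lt_mul_of_pos_left h (by positivity)
  · simp [h0]
  · have h1 : Tendsto (fun t : ℝ => s * t) atTop atTop :=
      Tendsto.const_mul_atTop hs0 tendsto_id
    have h2 : Tendsto (fun t : ℝ => η (s * t)) atTop atTop := htop.comp h1
    exact Tendsto.const_mul_atTop (by positivity) h2
  · intro x a b hbx
    obtain ⟨a', ha'L, ha'le, ha'ge, hFa'le, hFa'ge⟩ := hreal x a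
    obtain ⟨b', hb'L, hb'le, hb'ge, hFb'le, hFb'ge⟩ := hreal x b
    have hbx0 : 0 < dist b x := dist_pos.2 hbx
    have hb'0 : 0 < dist b' x := by
      by_contra h
      push_neg at h
      have : dist b' x = 0 := le_antisymm h dist_nonneg
      rw [this, mul_zero] at hb'ge
      linarith
    have hb'x : b' ≠ x := dist_pos.1 hb'0
    have hsd : Real.sqrt d ≤ s := le_max_left _ _
    -- ratio bound
    have hratio : dist a' x / dist b' x ≤ s * (dist a x / dist b x) := by
      have h1 : dist b x ≤ s * dist b' x :=
        le_trans hb'ge (mul_le_mul_of_nonneg_right hsd dist_nonneg)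
      have h2 : dist a' x * dist b x ≤ dist a x * (s * dist b' x) :=
        mul_le_mul ha'le h1 dist_nonneg dist_nonneg
      rw [← mul_div_assoc, div_le_div_iff₀ hb'0 hbx0]
      nlinarith
    have hline := hQSline x x a' b' (hLmem x) ha'L hb'L hb'x
    have hr0 : 0 ≤ dist a' x / dist b' x := by positivity
    have hηm : η (dist a' x / dist b' x) ≤ η (s * (dist a x / dist b x)) :=
      hmono.monotoneOn hr0 (le_trans hr0 hratio) hratio
    have hηn : 0 ≤ η (dist a' x / dist b' x) := hηnonneg _ hr0
    have hFb'0 : 0 ≤ dist (F b') (F x) := dist_nonneg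
    calc dist (F a) (F x) ≤ c * dist (F a') (F x) := hFa'ge
      _ ≤ c * (η (dist a' x / dist b' x) * dist (F b') (F x)) :=
          mul_le_mul_of_nonneg_left hline hc0.le
      _ ≤ c * (η (dist a' x / dist b' x) * (c * dist (F b) (F x))) := by
          apply mul_le_mul_of_nonneg_left _ hc0.le
          exact mul_le_mul_of_nonneg_left hFb'le hηn
      _ = c ^ 2 * η (dist a' x / dist b' x) * dist (F b) (F x) := by ring
      _ ≤ c ^ 2 * η (s * (dist a x / dist b x)) * dist (F b) (F x) := by
          apply mul_le_mul_of_nonneg_right _ dist_nonneg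
          exact mul_le_mul_of_nonneg_left hηm (by positivity)
end
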